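/- arXiv:2105.00778 — 4 statements merged into one kernel-verified Lean document; each statement's English description precedes it below -/
import Mathlib

section
/- Let l ∈ T(V*) and g ∈ G(V) be group-like. Then for all N > 2·deg(l)·|l|·|π_{≤deg(l)}(g)|, one has |exp(⟨l, g⟩) − ⟨exp^⧢(l), π_{≤N}(g)⟩| ≤ 4·exp(⟨l, 1⟩) · (|l|·|π_{≤deg(l)}(g)|)^{⌊N/deg(l)⌋+1} / (⌊N/deg(l)⌋+1)!. -/
/- Shuffle algebra on words: T(V*) modeled as finitely supported functions on
   words over the alphabet `Fin d`, T((V)) as arbitrary functions on words. -/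

noncomputable section

abbrev Word (d : ℕ) := List (Fin d)

/-- The shuffle product of two words, as a formal linear combination of words. -/
def shuffleWord {d : ℕ} : Word d → Word d → (Word d →₀ ℝ)
  | [], v => Finsupp.single v 1
  | w, [] => Finsupp.single w 1
  | i :: w, j :: v =>
      (shuffleWord w (j :: v)).mapDomain (i :: ·) +
      (shuffleWord (i :: w) v).mapDomain (j :: ·)
  termination_by w v => w.length + v.length
  decreasing_by all_goals (simp [List.length]; try omega)

/-- Bilinear extension of the shuffle product to `T(V*)`. -/
def shuffle {d : ℕ} (a b : Word d →₀ ℝ) : Word d →₀ ℝ :=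
  a.sum fun w cw => b.sum fun v cv => (cw * cv) • shuffleWord w v

/-- `n`-fold shuffle power, with `l^{⧢0} = ∅`. -/
def shufflePow {d : ℕ} (l : Word d →₀ ℝ) : ℕ → (Word d →₀ ℝ)
  | 0 => Finsupp.single [] 1
  | n + 1 => shuffle l (shufflePow l n)

/-- The natural pairing `⟨·,·⟩ : T(V*) × T((V)) → ℝ`. -/
def pairing {d : ℕ} (l : Word d →₀ ℝ) (g : Word d → ℝ) : ℝ :=
  l.sum fun w c => c * g w

/-- Group-like elements of `T((V))`. -/
def IsGroupLike {d : ℕ} (g : Word d → ℝ) : Prop :=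
  g ≠ 0 ∧ ∀ a b : Word d →₀ ℝ, pairing (shuffle a b) g = pairing a g * pairing b g

/-- `l̃`: the part of `l` with zero constant (empty-word) coefficient. -/
def tilde {d : ℕ} (l : Word d →₀ ℝ) : Word d →₀ ℝ := l - Finsupp.single [] (l [])

/-- The shuffle exponential `exp^⧢(l) = exp(a₀) Σ_{r≥0} l̃^{⧢r}/r!`, as an element of the
extended tensor algebra `T((V*))`; the sum is finite in each word-component since
`π_{≤N}(l̃^{⧢r}) = 0` for `r > N`. -/
def expShuffle {d : ℕ} (l : Word d →₀ ℝ) : Word d → ℝ :=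
  fun w => Real.exp (l []) *
    ∑ r ∈ Finset.range (w.length + 1), ((r.factorial : ℝ))⁻¹ * shufflePow (tilde l) r w

/-- Shuffle product of two elements of the extended tensor algebra `T((V*))`; the coefficient
of `w` in `u ⧢ v` vanishes unless both `u` and `v` are subsequences of `w`, so the sum is
finite. -/
def shuffleF {d : ℕ} (a b : Word d → ℝ) : Word d → ℝ :=
  fun w => ∑ p ∈ w.sublists.toFinset ×ˢ w.sublists.toFinset,
    a p.1 * b p.2 * shuffleWord p.1 p.2 w

/-- The ℓ¹-type norm `|l| = Σ_w |l_w|` on `T(V*)`. -/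
def normT {d : ℕ} (l : Word d →₀ ℝ) : ℝ := ∑ w ∈ l.support, |l w|

/-- The degree of `l`: the maximal length of a word in its support. -/
def degT {d : ℕ} (l : Word d →₀ ℝ) : ℕ := l.support.sup List.length

/-- `|π_{≤N}(g)|`: the norm of the truncation of `g ∈ T((V))`, i.e. the supremum of `|g_w|`
over words `w` of length at most `N` (the ℓ∞-norms on the tensor levels). -/
def normTrunc {d : ℕ} (g : Word d → ℝ) (N : ℕ) : ℝ :=
  ⨆ w : Word d, if w.length ≤ N then |g w| else 0

/-- `⟨a, π_{≤N}(g)⟩`: pairing of `a ∈ T((V*))` with the truncation of `g`.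
(All but finitely many summands vanish.) -/
def pairTrunc {d : ℕ} (a : Word d → ℝ) (N : ℕ) (g : Word d → ℝ) : ℝ :=
  ∑' w : Word d, if w.length ≤ N then a w * g w else 0

/-!
For group-like `g`, the generating polynomial `∑ₙ ⟨πₙ a, g⟩ Xⁿ` of `a ∈ T(V*)` is multiplicative
for the shuffle product, since the shuffle of words of lengths `i` and `j` is homogeneous of length
`i + j`. With `P` the polynomial of `l̃`, this gives `exp ⟨l, g⟩ = exp(a₀) exp(P(1))` and
`⟨exp^⧢(l), π_{≤N} g⟩ = exp(a₀) ∑_{r ≤ N} (1/r!) ∑_{n ≤ N} [Xⁿ] Pʳ`. For `r ≤ N / deg l` the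
polynomial `Pʳ` has degree at most `N`, so the `r`-th terms agree; the other terms of the
difference are at most `2yʳ/r!` in absolute value, where `y ≤ |l|·|π_{≤deg l} g|` is the value at `1` of a coefficientwise
majorant of `P`; the hypothesis on `N` gives `2y ≤ N / deg l + 2`, so this tail is dominated by a
geometric series of ratio `1/2`.
-/

open Polynomial Finsupp
open scoped Nat

section Majorant

variable {P P' Q Q' : ℝ[X]}

theorem abs_coeff_mul_le (hP : ∀ n, |P.coeff n| ≤ Q.coeff n) (hP' : ∀ n, |P'.coeff n| ≤ Q'.coeff n)
    (n : ℕ) : |(P * P').coeff n| ≤ (Q * Q').coeff n := by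
  rw [coeff_mul, coeff_mul]
  refine (Finset.abs_sum_le_sum_abs _ _).trans (Finset.sum_le_sum fun x _ => ?_)
  rw [abs_mul]
  exact mul_le_mul (hP _) (hP' _) (abs_nonneg _) ((abs_nonneg _).trans (hP _))

theorem abs_coeff_pow_le (h : ∀ n, |P.coeff n| ≤ Q.coeff n) (r n : ℕ) :
    |(P ^ r).coeff n| ≤ (Q ^ r).coeff n := by
  induction r generalizing n with
  | zero => simp only [pow_zero, coeff_one]; split_ifs <;> simp
  | succ r ih => rw [pow_succ, pow_succ]; exact abs_coeff_mul_le ih h n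

theorem abs_sum_coeff_le_eval_one (h : ∀ n, |P.coeff n| ≤ Q.coeff n) (s : Finset ℕ) :
    |∑ n ∈ s, P.coeff n| ≤ Q.eval 1 :=
  calc |∑ n ∈ s, P.coeff n|
      ≤ ∑ n ∈ s, Q.coeff n := (Finset.abs_sum_le_sum_abs _ _).trans (Finset.sum_le_sum fun n _ => h n)
    _ ≤ ∑ n ∈ s ∪ Q.support, Q.coeff n :=
      Finset.sum_le_sum_of_subset_of_nonneg Finset.subset_union_left
        fun n _ _ => (abs_nonneg _).trans (h n)
    _ = Q.eval 1 := by
      rw [eval_eq_sum, Polynomial.sum, ← Finset.sum_subset Finset.subset_union_right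
        fun n _ hn => Polynomial.notMem_support_iff.1 hn]
      simp only [one_pow, mul_one]

theorem abs_eval_one_le (h : ∀ n, |P.coeff n| ≤ Q.coeff n) : |P.eval 1| ≤ Q.eval 1 := by
  simpa only [eval_eq_sum_range, one_pow, mul_one] using abs_sum_coeff_le_eval_one h _

end Majorant

theorem pow_add_div_factorial_le_geometric {y : ℝ} {m : ℕ} (hy0 : 0 ≤ y) (hy : 2 * y ≤ m + 2)
    (k : ℕ) : y ^ (k + (m + 1)) / (k + (m + 1))! ≤ y ^ (m + 1) / (m + 1)! * (1 / 2) ^ k := by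
  induction k with
  | zero => simp
  | succ k ih =>
    have hratio : y / (k + (m + 1) + 1 : ℕ) ≤ 1 / 2 := by
      rw [div_le_iff₀ (by positivity)]
      push_cast
      linarith [(Nat.cast_nonneg k : (0 : ℝ) ≤ k)]
    calc y ^ (k + 1 + (m + 1)) / (k + 1 + (m + 1))!
        = y ^ (k + (m + 1)) / (k + (m + 1))! * (y / (k + (m + 1) + 1 : ℕ)) := by
          rw [show k + 1 + (m + 1) = k + (m + 1) + 1 by ring, pow_succ, Nat.factorial_succ]
          push_cast
          field_simp
      _ ≤ y ^ (m + 1) / (m + 1)! * (1 / 2) ^ k * (1 / 2) :=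
          mul_le_mul ih hratio (by positivity) (by positivity)
      _ = y ^ (m + 1) / (m + 1)! * (1 / 2) ^ (k + 1) := by rw [pow_succ (1 / 2 : ℝ) k, mul_assoc]

theorem abs_tsum_le_of_eq_zero_of_abs_le {c : ℕ → ℝ} {y K : ℝ} {m : ℕ} (hy0 : 0 ≤ y)
    (hy : 2 * y ≤ m + 2) (hc0 : ∀ r ≤ m, c r = 0) (hc : ∀ r, |c r| ≤ K * (y ^ r / r !)) :
    |∑' r, c r| ≤ 2 * K * (y ^ (m + 1) / (m + 1)!) := by
  have hK : 0 ≤ K := by simpa using (abs_nonneg _).trans (hc 0)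
  have hsum : Summable c :=
    Summable.of_norm_bounded ((Real.summable_pow_div_factorial y).mul_left K) hc
  rw [← hsum.sum_add_tsum_nat_add (m + 1),
    Finset.sum_eq_zero fun r hr => hc0 r (Nat.lt_succ_iff.1 (Finset.mem_range.1 hr)), zero_add]
  have hbound : ∀ k, ‖c (k + (m + 1))‖ ≤ K * (y ^ (m + 1) / (m + 1)!) * (1 / 2) ^ k := fun k => by
    rw [mul_assoc]
    exact (hc _).trans (mul_le_mul_of_nonneg_left (pow_add_div_factorial_le_geometric hy0 hy k) hK)
  have htail := tsum_of_norm_bounded (hasSum_geometric_two.mul_left _) hbound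
  rw [Real.norm_eq_abs] at htail
  linarith

theorem abs_exp_eval_one_sub_le {P Q : ℝ[X]} (hPQ : ∀ n, |P.coeff n| ≤ Q.coeff n)
    (hP0 : P.coeff 0 = 0) {m N : ℕ} (hmN : m * P.natDegree ≤ N) (hQ : 2 * Q.eval 1 ≤ m + 2) :
    |Real.exp (P.eval 1) - ∑ r ∈ Finset.range (N + 1), (r ! : ℝ)⁻¹ *
        ∑ n ∈ Finset.range (N + 1), (P ^ r).coeff n| ≤
      4 * Q.eval 1 ^ (m + 1) / (m + 1)! := by
  set t := P.eval 1
  set y := Q.eval 1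
  set A : ℕ → ℝ := fun r => ∑ n ∈ Finset.range (N + 1), (P ^ r).coeff n
  have hA_low : ∀ r ≤ m, A r = t ^ r := fun r hr => by
    have hdeg : (P ^ r).natDegree < N + 1 :=
      Nat.lt_succ_of_le (natDegree_pow_le.trans ((Nat.mul_le_mul_right _ hr).trans hmN))
    simp only [A, t, ← eval_pow, eval_eq_sum_range' hdeg, one_pow, mul_one]
  have hA_high : ∀ r ∉ Finset.range (N + 1), (r ! : ℝ)⁻¹ * A r = 0 := fun r hr => by
    have hdvd : X ^ r ∣ P ^ r := pow_dvd_pow_of_dvd (X_dvd_iff.2 hP0) r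
    rw [show A r = 0 from Finset.sum_eq_zero fun n hn => X_pow_dvd_iff.1 hdvd n ?_, mul_zero]
    simp only [Finset.mem_range] at hn hr
    omega
  have hA_le : ∀ r, |A r| ≤ y ^ r := fun r =>
    (abs_sum_coeff_le_eval_one (abs_coeff_pow_le hPQ r) _).trans_eq (eval_pow r)
  have ht : |t| ≤ y := abs_eval_one_le hPQ
  set c : ℕ → ℝ := fun r => t ^ r / (r ! : ℝ) - (r ! : ℝ)⁻¹ * A r
  have hexp : Real.exp t - ∑ r ∈ Finset.range (N + 1), (r ! : ℝ)⁻¹ * A r = ∑' r, c r :=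
    ((Real.exp_eq_exp_ℝ ▸ NormedSpace.expSeries_div_hasSum_exp t).sub
      (hasSum_sum_of_ne_finset_zero hA_high)).tsum_eq.symm
  have hc0 : ∀ r ≤ m, c r = 0 := fun r hr => by
    simp only [c, hA_low r hr, div_eq_inv_mul, sub_self]
  have hc : ∀ r, |c r| ≤ 2 * (y ^ r / r !) := fun r =>
    calc |c r| ≤ |t ^ r / (r ! : ℝ)| + |(r ! : ℝ)⁻¹ * A r| := abs_sub _ _
      _ = |t| ^ r / r ! + |A r| / r ! := by
        rw [abs_div, abs_pow, abs_mul, abs_inv, Nat.abs_cast, inv_mul_eq_div]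
      _ ≤ y ^ r / r ! + y ^ r / r ! := by gcongr; exact hA_le r
      _ = 2 * (y ^ r / r !) := by ring
  rw [hexp, mul_div_assoc]
  linarith [abs_tsum_le_of_eq_zero_of_abs_le ((abs_nonneg t).trans ht) hQ hc0 hc]

section Words

variable {d : ℕ}

theorem shuffleWord_mem_supported (u v : Word d) :
    shuffleWord u v ∈ supported ℝ ℝ {w : Word d | w.length = u.length + v.length} := by
  induction u, v using shuffleWord.induct with
  | case1 v => rw [shuffleWord]; exact single_mem_supported ℝ _ (by simp)
  | case2 u hu =>
    cases u with
    | nil => exact absurd rfl hu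
    | cons i u => rw [shuffleWord]; exacts [single_mem_supported ℝ _ (by simp), hu]
  | case3 i u j v ih₁ ih₂ =>
    rw [shuffleWord]
    refine add_mem (supported_comap_lmapDomain ℝ ℝ _ _ (supported_mono ?_ ih₁))
      (supported_comap_lmapDomain ℝ ℝ _ _ (supported_mono ?_ ih₂)) <;>
    · intro w hw
      simp only [Set.mem_ofPred_eq, Set.mem_preimage, List.length_cons] at hw ⊢
      omega

theorem shuffle_mem_supported {a b : Word d →₀ ℝ} {s t r : Set (Word d)}
    (ha : a ∈ supported ℝ ℝ s) (hb : b ∈ supported ℝ ℝ t)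
    (h : ∀ u ∈ s, ∀ v ∈ t, shuffleWord u v ∈ supported ℝ ℝ r) :
    shuffle a b ∈ supported ℝ ℝ r :=
  sum_mem fun u hu => sum_mem fun v hv =>
    Submodule.smul_mem _ _ (h u ((mem_supported ℝ a).1 ha hu) v ((mem_supported ℝ b).1 hb hv))

theorem shufflePow_mem_supported_length_ge {a : Word d →₀ ℝ} (ha : a [] = 0) (r : ℕ) :
    shufflePow a r ∈ supported ℝ ℝ {w : Word d | r ≤ w.length} := by
  induction r with
  | zero => exact single_mem_supported ℝ _ (by simp)
  | succ r ih =>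
    have ha' : a ∈ supported ℝ ℝ {w : Word d | 1 ≤ w.length} := by
      refine (mem_supported' ℝ a).2 fun w hw => ?_
      cases w
      · exact ha
      · simp at hw
    refine shuffle_mem_supported ha' ih fun u hu v hv =>
      supported_mono (fun w hw => ?_) (shuffleWord_mem_supported u v)
    simp only [Set.mem_ofPred_eq] at hu hv hw ⊢
    omega

/-- `gradedPairing g a = ∑ₙ ⟨πₙ a, g⟩ Xⁿ`. -/
def gradedPairing (g : Word d → ℝ) : (Word d →₀ ℝ) →ₗ[ℝ] ℝ[X] :=
  linearCombination ℝ fun w => monomial w.length (g w)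

theorem gradedPairing_apply (g : Word d → ℝ) (a : Word d →₀ ℝ) :
    gradedPairing g a = a.sum fun w c => monomial w.length (c * g w) := by
  simp only [gradedPairing, linearCombination_apply, smul_monomial, smul_eq_mul]

theorem coeff_gradedPairing (g : Word d → ℝ) (a : Word d →₀ ℝ) (n : ℕ) :
    (gradedPairing g a).coeff n = a.sum fun w c => if w.length = n then c * g w else 0 := by
  simp only [gradedPairing_apply, Finsupp.sum, finsetSum_coeff, coeff_monomial]

theorem eval_one_gradedPairing (g : Word d → ℝ) (a : Word d →₀ ℝ) :
    (gradedPairing g a).eval 1 = pairing a g := by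
  simp only [gradedPairing_apply, Finsupp.sum, eval_finsetSum, eval_monomial, one_pow, mul_one,
    pairing]

theorem gradedPairing_eq_monomial {g : Word d → ℝ} {a : Word d →₀ ℝ} {n : ℕ}
    (ha : a ∈ supported ℝ ℝ {w : Word d | w.length = n}) :
    gradedPairing g a = monomial n (pairing a g) := by
  rw [gradedPairing_apply, pairing, Finsupp.sum, Finsupp.sum, map_sum]
  exact Finset.sum_congr rfl fun w hw => by rw [(mem_supported ℝ a).1 ha hw]

theorem natDegree_gradedPairing_le {g : Word d → ℝ} {a : Word d →₀ ℝ} {n : ℕ}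
    (ha : a ∈ supported ℝ ℝ {w : Word d | w.length ≤ n}) :
    (gradedPairing g a).natDegree ≤ n := by
  rw [gradedPairing_apply]
  refine natDegree_sum_le_of_forall_le _ _ fun w hw => (natDegree_monomial_le _).trans ?_
  exact (mem_supported ℝ a).1 ha hw

theorem IsGroupLike.pairing_shuffleWord {g : Word d → ℝ} (hg : IsGroupLike g) (u v : Word d) :
    pairing (shuffleWord u v) g = g u * g v := by
  simpa [shuffle, pairing, sum_single_index] using hg.2 (single u 1) (single v 1)

theorem shuffleWord_nil_right (w : Word d) : shuffleWord w [] = single w 1 := by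
  cases w <;> simp [shuffleWord]

theorem IsGroupLike.apply_nil {g : Word d → ℝ} (hg : IsGroupLike g) : g [] = 1 := by
  by_contra h
  refine hg.1 (funext fun w => (mul_right_eq_self₀.1 ?_).resolve_left h)
  simpa [shuffleWord_nil_right, pairing, sum_single_index] using (hg.pairing_shuffleWord w []).symm

theorem IsGroupLike.gradedPairing_shuffle {g : Word d → ℝ} (hg : IsGroupLike g)
    (a b : Word d →₀ ℝ) : gradedPairing g (shuffle a b) = gradedPairing g a * gradedPairing g b := by
  rw [gradedPairing_apply g a, gradedPairing_apply g b, Finsupp.sum_mul]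
  simp only [Finsupp.mul_sum, monomial_mul_monomial, shuffle, map_finsuppSum, map_smul,
    gradedPairing_eq_monomial (shuffleWord_mem_supported _ _), hg.pairing_shuffleWord,
    smul_monomial, smul_eq_mul]
  refine Finsupp.sum_congr fun u _ => Finsupp.sum_congr fun v _ => ?_
  ring_nf

theorem IsGroupLike.gradedPairing_shufflePow {g : Word d → ℝ} (hg : IsGroupLike g)
    (a : Word d →₀ ℝ) (r : ℕ) : gradedPairing g (shufflePow a r) = gradedPairing g a ^ r := by
  induction r with
  | zero => simp [shufflePow, gradedPairing_apply, sum_single_index, hg.apply_nil]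
  | succ r ih => rw [shufflePow, hg.gradedPairing_shuffle, ih, pow_succ']

theorem coeff_zero_gradedPairing {a : Word d →₀ ℝ} (ha : a [] = 0) (g : Word d → ℝ) :
    (gradedPairing g a).coeff 0 = 0 := by
  rw [coeff_gradedPairing]
  refine Finset.sum_eq_zero fun w hw => if_neg fun h => mem_support_iff.1 hw ?_
  rwa [List.length_eq_zero_iff.1 h]

theorem abs_coeff_gradedPairing_le (g : Word d → ℝ) (a : Word d →₀ ℝ) (n : ℕ) :
    |(gradedPairing g a).coeff n| ≤
      (gradedPairing (fun w => |g w|) (a.mapRange abs abs_zero)).coeff n := by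
  rw [coeff_gradedPairing, coeff_gradedPairing, sum_mapRange_index (by simp)]
  refine (Finset.abs_sum_le_sum_abs _ _).trans (Finset.sum_le_sum fun w _ => ?_)
  dsimp only
  split_ifs <;> simp [abs_mul]

theorem normTrunc_nonneg (g : Word d → ℝ) (n : ℕ) : 0 ≤ normTrunc g n :=
  Real.iSup_nonneg fun w => by split_ifs <;> positivity

theorem abs_le_normTrunc (g : Word d → ℝ) {n : ℕ} {w : Word d} (hw : w.length ≤ n) :
    |g w| ≤ normTrunc g n := by
  have hbdd : BddAbove (Set.range fun v : Word d => if v.length ≤ n then |g v| else 0) :=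
    (((List.finite_length_le _ n).image fun v => |g v|).insert 0).bddAbove.mono <| by
      rintro _ ⟨v, rfl⟩
      dsimp only
      split_ifs with hv
      exacts [Or.inr ⟨v, hv, rfl⟩, Or.inl rfl]
  have h := le_ciSup hbdd w
  rwa [if_pos hw] at h

theorem eval_one_gradedPairing_abs_le {a : Word d →₀ ℝ} {n : ℕ}
    (ha : a ∈ supported ℝ ℝ {w : Word d | w.length ≤ n}) (g : Word d → ℝ) :
    (gradedPairing (fun w => |g w|) (a.mapRange abs abs_zero)).eval 1 ≤
      normT a * normTrunc g n := by
  rw [eval_one_gradedPairing, pairing, sum_mapRange_index (by simp), normT, Finset.sum_mul]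
  exact Finset.sum_le_sum fun w hw =>
    mul_le_mul_of_nonneg_left (abs_le_normTrunc g ((mem_supported ℝ a).1 ha hw)) (abs_nonneg _)

theorem pairTrunc_congr {a b : Word d → ℝ} {N : ℕ} (h : ∀ w : Word d, w.length ≤ N → a w = b w)
    (g : Word d → ℝ) : pairTrunc a N g = pairTrunc b N g :=
  tsum_congr fun w => by
    split_ifs with hw
    · rw [h w hw]
    · rfl

theorem pairTrunc_coe (a : Word d →₀ ℝ) (N : ℕ) (g : Word d → ℝ) :
    pairTrunc a N g = ∑ n ∈ Finset.range (N + 1), (gradedPairing g a).coeff n := by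
  simp only [coeff_gradedPairing, Finsupp.sum]
  rw [Finset.sum_comm, pairTrunc,
    tsum_eq_sum (s := a.support) fun w hw => by rw [notMem_support_iff.1 hw]; simp]
  refine Finset.sum_congr rfl fun w _ => ?_
  simp [Finset.sum_ite_eq]

section Tilde

variable (l : Word d →₀ ℝ)

theorem tilde_eq_erase : tilde l = l.erase [] := (erase_eq_sub_single l []).symm

theorem tilde_apply_nil : tilde l [] = 0 := by simp [tilde_eq_erase]

theorem tilde_mem_supported : tilde l ∈ supported ℝ ℝ {w : Word d | w.length ≤ degT l} :=
  (mem_supported ℝ _).2 fun w hw => Finset.le_sup (f := List.length)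
    (Finset.mem_of_mem_erase (by rwa [tilde_eq_erase, Finsupp.support_erase] at hw))

theorem normT_tilde_le : normT (tilde l) ≤ normT l := by
  rw [normT, normT, tilde_eq_erase, Finsupp.support_erase]
  calc ∑ w ∈ l.support.erase [], |l.erase [] w|
      = ∑ w ∈ l.support.erase [], |l w| :=
        Finset.sum_congr rfl fun w hw => by rw [Finsupp.erase_ne (Finset.ne_of_mem_erase hw)]
    _ ≤ ∑ w ∈ l.support, |l w| :=
        Finset.sum_le_sum_of_subset_of_nonneg (Finset.erase_subset _ _) fun _ _ _ => abs_nonneg _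

theorem tilde_eq_zero_of_degT_eq_zero (h : degT l = 0) : tilde l = 0 := by
  ext w
  rcases w with _ | ⟨i, w⟩
  · exact tilde_apply_nil l
  · exact (mem_supported' ℝ _).1 (tilde_mem_supported l) _ (by simp [h])

theorem pairing_eq_add_pairing_tilde {g : Word d → ℝ} (hg : IsGroupLike g) :
    pairing l g = l [] + pairing (tilde l) g := by
  rw [← eval_one_gradedPairing, ← eval_one_gradedPairing, tilde_eq_erase]
  conv_lhs => rw [← single_add_erase [] l]
  rw [map_add, eval_add, gradedPairing_apply, sum_single_index (by simp)]
  simp [hg.apply_nil]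

theorem eval_one_majorant_le (g : Word d → ℝ) :
    (gradedPairing (fun w => |g w|) ((tilde l).mapRange abs abs_zero)).eval 1 ≤
      normT l * normTrunc g (degT l) :=
  (eval_one_gradedPairing_abs_le (tilde_mem_supported l) g).trans
    (mul_le_mul_of_nonneg_right (normT_tilde_le l) (normTrunc_nonneg g _))

theorem two_mul_eval_one_majorant_le {g : Word d → ℝ} {N : ℕ}
    (hN : (N : ℝ) > 2 * (degT l : ℝ) * normT l * normTrunc g (degT l)) :
    2 * (gradedPairing (fun w => |g w|) ((tilde l).mapRange abs abs_zero)).eval 1 ≤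
      (N / degT l : ℕ) + 2 := by
  rcases Nat.eq_zero_or_pos (degT l) with hD | hD
  · simp only [tilde_eq_zero_of_degT_eq_zero l hD, mapRange_zero, map_zero, eval_zero, mul_zero]
    positivity
  · -- multiply `eval_one_majorant_le` by `2 · deg l` and use `N < (N / deg l + 1) · deg l`
    have hNlt : (N : ℝ) < ((N / degT l : ℕ) + 1) * degT l := by
      exact_mod_cast (Nat.lt_div_mul_add hD).trans_eq (by ring)
    have hDpos : (0 : ℝ) < degT l := by exact_mod_cast hD
    nlinarith [eval_one_majorant_le l g]

theorem expShuffle_apply_of_length_le {N : ℕ} {w : Word d} (hw : w.length ≤ N) :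
    expShuffle l w = (Real.exp (l []) •
      ∑ r ∈ Finset.range (N + 1), (r ! : ℝ)⁻¹ • shufflePow (tilde l) r) w := by
  simp only [expShuffle, Finsupp.smul_apply, Finsupp.coe_finsetSum, Finset.sum_apply, smul_eq_mul]
  congr 1
  refine Finset.sum_subset (Finset.range_subset_range.2 (by omega)) fun r _ hr => ?_
  rw [(mem_supported' ℝ _).1 (shufflePow_mem_supported_length_ge (tilde_apply_nil l) r) w
    (by simpa using hr), mul_zero]

theorem pairTrunc_expShuffle {g : Word d → ℝ} (hg : IsGroupLike g) (N : ℕ) :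
    pairTrunc (expShuffle l) N g = Real.exp (l []) * ∑ r ∈ Finset.range (N + 1), (r ! : ℝ)⁻¹ *
      ∑ n ∈ Finset.range (N + 1), (gradedPairing g (tilde l) ^ r).coeff n := by
  rw [pairTrunc_congr (fun w => expShuffle_apply_of_length_le l) g, pairTrunc_coe]
  simp only [map_smul, map_sum, hg.gradedPairing_shufflePow, coeff_smul, finsetSum_coeff,
    smul_eq_mul, Finset.mul_sum]
  exact Finset.sum_comm

end Tilde

end Words

/-- quantitative approximation of `exp(⟨l, g⟩)` by
`⟨exp^⧢(l), π_{≤N}(g)⟩` for group-like `g`. -/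
theorem statement3 {d : ℕ} (l : Word d →₀ ℝ) (g : Word d → ℝ) (hg : IsGroupLike g)
    (N : ℕ) (hN : (N : ℝ) > 2 * (degT l : ℝ) * normT l * normTrunc g (degT l)) :
    |Real.exp (pairing l g) - pairTrunc (expShuffle l) N g| ≤
      4 * Real.exp (l []) *
        (normT l * normTrunc g (degT l)) ^ (N / degT l + 1) /
          (Nat.factorial (N / degT l + 1)) := by
  set P := gradedPairing g (tilde l)
  set Q := gradedPairing (fun w => |g w|) ((tilde l).mapRange abs abs_zero)
  have hPQ : ∀ n, |P.coeff n| ≤ Q.coeff n := abs_coeff_gradedPairing_le g (tilde l)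
  have hQ0 : 0 ≤ Q.eval 1 := (abs_nonneg _).trans (abs_sum_coeff_le_eval_one hPQ ∅)
  have hdeg : N / degT l * P.natDegree ≤ N :=
    (Nat.mul_le_mul_left _ (natDegree_gradedPairing_le (tilde_mem_supported l))).trans
      (Nat.div_mul_le_self N _)
  have hexp := abs_exp_eval_one_sub_le hPQ (coeff_zero_gradedPairing (tilde_apply_nil l) g) hdeg
    (two_mul_eval_one_majorant_le l hN)
  rw [pairing_eq_add_pairing_tilde l hg, Real.exp_add, pairTrunc_expShuffle l hg, ← mul_sub,
    abs_mul, Real.abs_exp, ← eval_one_gradedPairing, mul_comm 4, mul_assoc, mul_div_assoc]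
  refine mul_le_mul_of_nonneg_left (hexp.trans ?_) (Real.exp_pos _).le
  gcongr
  exact eval_one_majorant_le l g
end
end

section
/- Let Z be a nonnegative random variable with cumulative distribution function F_Z, independent of a σ-field G, and let A : [0,T] → [0,∞) be a G-measurable nondecreasing continuous process with A(0) = 0. Define τ := inf{t ≥ 0 : A(t∧T) ≥ Z} (with inf∅ = ∞). Then for any bounded continuous adapted process Y and deterministic time S ∈ [0,T], E[Y_{τ∧S} | G] = ∫₀^S Y_t dF̃(t) + Y_S (1 − F̃(S)), where F̃(t) := F_Z(A(t)). -/
open MeasureTheory ProbabilityTheory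
open scoped Classical

/-!
Conditionally on `𝒢` the path `A` is frozen while `Z`, being independent of `𝒢`, keeps its law
`μ`; hence `E[Y_{τ∧S} | 𝒢](ω) = ∫ Y_{τ_{A(ω)}(z) ∧ S}(ω) dμ(z)`, a computation for a
deterministic path. For such a path, `τ(z) ∧ S ≤ c` iff `S ≤ c` or `z ≤ A c` (for `c ≥ 0`), so
under `μ` the time `τ ∧ S` has the Stieltjes measure of `F_Z ∘ A` on `(0, S]` plus an atom of
mass `1 - F_Z (A S)` at `S`; there is no atom at `0` because `Z > 0` almost surely.
-/

open Set

theorem condExp_comp_prodMk_ae_eq_integral_of_indepFun {α β γ E : Type*}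
    {mα : MeasurableSpace α} {mβ : MeasurableSpace β} [MeasurableSpace γ]
    [StandardBorelSpace γ] [Nonempty γ] [NormedAddCommGroup E] [NormedSpace ℝ E]
    [CompleteSpace E] {μ : Measure α} [IsFiniteMeasure μ] {X : α → β} {Y : α → γ}
    (hX : Measurable X) (hY : Measurable Y) (hXY : IndepFun X Y μ) {f : β × γ → E}
    (hf : StronglyMeasurable f) (hf_int : Integrable (fun a => f (X a, Y a)) μ) :
    μ[fun a => f (X a, Y a) | mβ.comap X] =ᵐ[μ] fun a => ∫ y, f (X a, y) ∂(μ.map Y) := by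
  have hκ : condDistrib Y X μ =ᵐ[μ.map X] Kernel.const β (μ.map Y) := by
    refine condDistrib_ae_eq_of_measure_eq_compProd X hY.aemeasurable ?_
    rw [Measure.compProd_const]
    exact (indepFun_iff_map_prod_eq_prod_map_map hX.aemeasurable hY.aemeasurable).1 hXY
  filter_upwards [condExp_prod_ae_eq_integral_condDistrib hX hY.aemeasurable hf hf_int,
    ae_of_ae_map hX.aemeasurable hκ] with a hcond hconst
  rw [hcond, hconst, Kernel.const_apply]

theorem IsClosed.csInf_le_iff_mem_of_isUpperSet {α : Type*}
    [ConditionallyCompleteLinearOrder α] [TopologicalSpace α] [OrderTopology α]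
    {s : Set α} (hc : IsClosed s) (hu : IsUpperSet s) (hs : s.Nonempty) (hb : BddBelow s)
    {c : α} : sInf s ≤ c ↔ c ∈ s :=
  ⟨fun h => hu h (hc.csInf_mem hs hb), fun h => csInf_le hb h⟩

/-- `τ ∧ S` for the first time `τ ≥ 0` at which `A (τ ∧ T)` reaches level `z`, with `τ = ∞`
when the level is never reached. -/
noncomputable def stoppedHittingTime (A : ℝ → ℝ) (T S z : ℝ) : ℝ :=
  if ∃ t, 0 ≤ t ∧ z ≤ A (min t T) then min (sInf {t | 0 ≤ t ∧ z ≤ A (min t T)}) S else S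

section
variable {A : ℝ → ℝ} {T S : ℝ}

theorem stoppedHittingTime_le_iff (hA : Monotone A) (hAc : Continuous A) (hS : S ∈ Icc 0 T)
    (z c : ℝ) : stoppedHittingTime A T S z ≤ c ↔ S ≤ c ∨ (0 ≤ c ∧ z ≤ A c) := by
  rcases le_or_gt S c with hSc | hcS
  · simp only [hSc, true_or, iff_true, stoppedHittingTime]
    split_ifs
    exacts [min_le_of_right_le hSc, hSc]
  have hmin : min c T = c := min_eq_left (hcS.le.trans hS.2)
  simp only [not_le.2 hcS, false_or, stoppedHittingTime]
  split_ifs with hne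
  · have hclosed : IsClosed {t | 0 ≤ t ∧ z ≤ A (min t T)} :=
      isClosed_Ici.inter
        (isClosed_le continuous_const (hAc.comp (continuous_id.min continuous_const)))
    have hupper : IsUpperSet {t | 0 ≤ t ∧ z ≤ A (min t T)} := fun s t hst hs =>
      ⟨hs.1.trans hst, hs.2.trans (hA (min_le_min_right T hst))⟩
    rw [min_le_iff, hclosed.csInf_le_iff_mem_of_isUpperSet hupper hne ⟨0, fun t ht => ht.1⟩]
    simp [hmin, not_le.2 hcS]
  · refine iff_of_false (not_le.2 hcS) fun ⟨h0, hz⟩ => hne ⟨c, h0, by rwa [hmin]⟩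

theorem preimage_Iic_stoppedHittingTime (hA : Monotone A) (hAc : Continuous A)
    (hS : S ∈ Icc 0 T) (c : ℝ) :
    stoppedHittingTime A T S ⁻¹' Iic c = {z | S ≤ c ∨ (0 ≤ c ∧ z ≤ A c)} :=
  ext fun z => stoppedHittingTime_le_iff hA hAc hS z c

theorem measurable_stoppedHittingTime (hA : Monotone A) (hAc : Continuous A)
    (hS : S ∈ Icc 0 T) : Measurable (stoppedHittingTime A T S) := by
  refine measurable_of_Iic fun c => ?_
  rw [preimage_Iic_stoppedHittingTime hA hAc hS]
  exact (MeasurableSet.const _).union ((MeasurableSet.const _).inter measurableSet_Iic)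

theorem map_stoppedHittingTime {μ : Measure ℝ} [IsProbabilityMeasure μ] (hμ0 : μ (Iic 0) = 0)
    (hA : Monotone A) (hAc : Continuous A) (hA0 : ∀ t ≤ 0, A t = 0) (hS : S ∈ Icc 0 T)
    {F : StieltjesFunction ℝ} (hF : ∀ t, F t = cdf μ (A t)) :
    μ.map (stoppedHittingTime A T S)
      = F.measure.restrict (Ioc 0 S) + ENNReal.ofReal (1 - F S) • Measure.dirac S := by
  have hF0 : ∀ t ≤ 0, F t = 0 := fun t ht => by
    rw [hF, hA0 t ht, cdf_eq_real, measureReal_def, hμ0, ENNReal.toReal_zero]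
  refine Measure.ext_of_Iic _ _ fun c => ?_
  rw [Measure.map_apply (measurable_stoppedHittingTime hA hAc hS) measurableSet_Iic,
    preimage_Iic_stoppedHittingTime hA hAc hS, Measure.add_apply, Measure.smul_apply,
    Measure.restrict_apply measurableSet_Iic, inter_comm, Ioc_inter_Iic,
    StieltjesFunction.measure_Ioc, hF0 0 le_rfl, sub_zero, smul_eq_mul, Measure.dirac_apply]
  rcases le_or_gt S c with hSc | hcS
  · have hFS : F S ≤ 1 := hF S ▸ cdf_le_one μ _
    simp only [hSc, true_or, ofPred_true, measure_univ, inf_of_le_left hSc,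
      indicator_of_mem (mem_Iic.2 hSc), Pi.one_apply, mul_one]
    rw [← ENNReal.ofReal_add (hF S ▸ cdf_nonneg μ _) (sub_nonneg.2 hFS), add_sub_cancel,
      ENNReal.ofReal_one]
  simp only [not_le.2 hcS, false_or, inf_of_le_right hcS.le,
    indicator_of_notMem (notMem_Iic.2 hcS), mul_zero, add_zero]
  rcases le_or_gt 0 c with hc0 | hc0
  · simp only [hc0, true_and]
    exact (hF c ▸ ofReal_cdf μ (A c)).symm
  · simp [not_le.2 hc0, hF0 c hc0.le]

theorem integral_map_comp_stoppedHittingTime {Ω : Type*} {mΩ : MeasurableSpace Ω}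
    {P : Measure Ω} [IsProbabilityMeasure P] {Z : Ω → ℝ} (hZ : Measurable Z)
    (hZpos : ∀ᵐ ω ∂P, 0 < Z ω) (hA : Monotone A) (hAc : Continuous A) (hA0 : ∀ t ≤ 0, A t = 0)
    (hS : S ∈ Icc 0 T) {F : StieltjesFunction ℝ} (hF : ∀ t, F t = cdf (P.map Z) (A t))
    {y : ℝ → ℝ} (hy : Continuous y) :
    ∫ z, y (stoppedHittingTime A T S z) ∂(P.map Z)
      = (∫ t in Ioc 0 S, y t ∂F.measure) + y S * (1 - F S) := by
  have : IsProbabilityMeasure (P.map Z) := Measure.isProbabilityMeasure_map hZ.aemeasurable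
  have hμ0 : P.map Z (Iic 0) = 0 := by
    rw [Measure.map_apply hZ measurableSet_Iic]
    exact measure_mono_null (fun ω hω => not_lt.2 hω) (ae_iff.1 hZpos)
  have hFS : F S ≤ 1 := hF S ▸ cdf_le_one _ _
  rw [← integral_map (measurable_stoppedHittingTime hA hAc hS).aemeasurable
      hy.aestronglyMeasurable, map_stoppedHittingTime hμ0 hA hAc hA0 hS hF,
    integral_add_measure ((hy.integrableOn_Icc).mono_set Ioc_subset_Icc_self)
      ((integrable_dirac enorm_lt_top).smul_measure ENNReal.ofReal_ne_top),
    integral_smul_measure, integral_dirac, ENNReal.toReal_ofReal (sub_nonneg.2 hFS), smul_eq_mul,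
    mul_comm]

end

theorem measurable_stoppedHittingTime_uncurry {α : Type*} {mα : MeasurableSpace α}
    {A : α → ℝ → ℝ} {T S : ℝ} (hAmono : ∀ a, Monotone (A a)) (hAcont : ∀ a, Continuous (A a))
    (hAmeas : ∀ t, Measurable fun a => A a t) (hS : S ∈ Icc 0 T) :
    Measurable fun p : α × ℝ => stoppedHittingTime (A p.1) T S p.2 := by
  refine measurable_of_Iic fun c => ?_
  have : (fun p : α × ℝ => stoppedHittingTime (A p.1) T S p.2) ⁻¹' Iic c
      = {p | S ≤ c ∨ (0 ≤ c ∧ p.2 ≤ A p.1 c)} :=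
    ext fun p => stoppedHittingTime_le_iff (hAmono p.1) (hAcont p.1) hS p.2 c
  rw [this]
  exact (MeasurableSet.const _).union ((MeasurableSet.const _).inter
    (measurableSet_le measurable_snd ((hAmeas c).comp measurable_fst)))

theorem stronglyMeasurable_comp_stoppedHittingTime {α : Type*} {mα : MeasurableSpace α}
    {A : α → ℝ → ℝ} {T S : ℝ} (hAmono : ∀ a, Monotone (A a)) (hAcont : ∀ a, Continuous (A a))
    (hAmeas : ∀ t, Measurable fun a => A a t) (hS : S ∈ Icc 0 T)
    {Y : ℝ → α → ℝ} (hYmeas : ∀ t, Measurable (Y t)) (hYcont : ∀ a, Continuous fun t => Y t a) :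
    StronglyMeasurable fun p : α × ℝ => Y (stoppedHittingTime (A p.1) T S p.2) p.1 :=
  (stronglyMeasurable_uncurry_of_continuous_of_stronglyMeasurable hYcont
    fun t => (hYmeas t).stronglyMeasurable).comp_measurable
    ((measurable_stoppedHittingTime_uncurry hAmono hAcont hAmeas hS).prodMk measurable_fst)

theorem statement7_general {Ω : Type*} {m0 : MeasurableSpace Ω} (P : Measure Ω)
    [IsProbabilityMeasure P]
    (Z : Ω → ℝ) (hZmeas : Measurable Z)
    (hZpos : ∀ᵐ ω ∂P, 0 < Z ω)
    (FZ : StieltjesFunction ℝ) (hFZ : FZ = cdf (P.map Z))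
    (𝒢 : MeasurableSpace Ω) (h𝒢 : 𝒢 ≤ m0)
    (hindep : Indep (MeasurableSpace.comap Z inferInstance) 𝒢 P)
    (T S : ℝ) (hS : S ∈ Set.Icc 0 T)
    (A : Ω → ℝ → ℝ)
    (hAmono : ∀ ω, Monotone (A ω)) (hAcont : ∀ ω, Continuous (A ω))
    (hA0 : ∀ ω t, t ≤ 0 → A ω t = 0)
    (hAmeas : ∀ t, Measurable[𝒢] fun ω => A ω t)
    (Y : ℝ → Ω → ℝ) (hYmeas : ∀ t, Measurable[𝒢] (Y t))
    (hYcont : ∀ ω, Continuous fun t => Y t ω)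
    (C : ℝ) (hYbdd : ∀ t ω, |Y t ω| ≤ C)
    (F : Ω → StieltjesFunction ℝ)
    (hF : ∀ ω t, F ω t = FZ (A ω t)) :
    MeasureTheory.condExp 𝒢 P
        (fun ω =>
          if _ : ∃ t, 0 ≤ t ∧ Z ω ≤ A ω (min t T) then
            Y (min (sInf {t | 0 ≤ t ∧ Z ω ≤ A ω (min t T)}) S) ω
          else Y S ω)
      =ᵐ[P] fun ω => (∫ t in Set.Ioc 0 S, Y t ω ∂(F ω).measure) + Y S ω * (1 - F ω S) := by
  subst hFZ
  have hf := stronglyMeasurable_comp_stoppedHittingTime (mα := 𝒢) hAmono hAcont hAmeas hS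
    hYmeas hYcont
  have hid : Measurable[m0, 𝒢] id := measurable_id'' h𝒢
  have hint : Integrable (fun ω => Y (stoppedHittingTime (A ω) T S (Z ω)) ω) P :=
    .of_bound (hf.comp_measurable (hid.prodMk hZmeas)).aestronglyMeasurable C
      (ae_of_all _ fun ω => hYbdd _ ω)
  have hfreeze := condExp_comp_prodMk_ae_eq_integral_of_indepFun hid hZmeas
    ((IndepFun_iff_Indep _ _ _).2 (by rw [MeasurableSpace.comap_id]; exact hindep.symm)) hf hint
  rw [MeasurableSpace.comap_id] at hfreeze
  refine (condExp_congr_ae (ae_of_all _ fun ω => ?_)).trans (hfreeze.trans (ae_of_all _ fun ω =>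
    integral_map_comp_stoppedHittingTime hZmeas hZpos (hAmono ω) (hAcont ω) (hA0 ω) hS (hF ω)
      (hYcont ω)))
  show _ = Y (stoppedHittingTime (A ω) T S (Z ω)) ω
  unfold stoppedHittingTime
  split_ifs <;> rfl

/-- disintegration formula for randomized stopping times. If `Z ≥ 0` is
independent of `𝒢`, `A(ω, ·)` is a `𝒢`-measurable nondecreasing continuous process vanishing
at `0`, `τ = inf{t ≥ 0 : A(t∧T) ≥ Z}` (with `inf ∅ = ∞`), and `Y` is a bounded continuous
`𝒢`-measurable process, then
`E[Y_{τ∧S} | 𝒢] = ∫₀^S Y_t dF̃(t) + Y_S (1 − F̃(S))`, where `F̃(t) = F_Z(A(t))`. -/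
theorem statement7 {Ω : Type*} {m0 : MeasurableSpace Ω} (P : Measure Ω)
    [IsProbabilityMeasure P]
    (Z : Ω → ℝ) (hZmeas : Measurable Z) (hZnn : ∀ ω, 0 ≤ Z ω)
    (hZpos : ∀ᵐ ω ∂P, 0 < Z ω)
    (FZ : StieltjesFunction ℝ) (hFZ : FZ = cdf (P.map Z))
    (𝒢 : MeasurableSpace Ω) (h𝒢 : 𝒢 ≤ m0)
    (hindep : Indep (MeasurableSpace.comap Z inferInstance) 𝒢 P)
    (T S : ℝ) (hT : 0 < T) (hS : S ∈ Set.Icc 0 T)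
    (A : Ω → ℝ → ℝ)
    (hAmono : ∀ ω, Monotone (A ω)) (hAcont : ∀ ω, Continuous (A ω))
    (hAnn : ∀ ω t, 0 ≤ A ω t) (hA0 : ∀ ω t, t ≤ 0 → A ω t = 0)
    (hAmeas : ∀ t, Measurable[𝒢] fun ω => A ω t)
    (Y : ℝ → Ω → ℝ) (hYmeas : ∀ t, Measurable[𝒢] (Y t))
    (hYcont : ∀ ω, Continuous fun t => Y t ω)
    (C : ℝ) (hYbdd : ∀ t ω, |Y t ω| ≤ C)
    (F : Ω → StieltjesFunction ℝ)
    (hF : ∀ ω t, F ω t = FZ (A ω t)) :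
    MeasureTheory.condExp 𝒢 P
        (fun ω =>
          if _ : ∃ t, 0 ≤ t ∧ Z ω ≤ A ω (min t T) then
            Y (min (sInf {t | 0 ≤ t ∧ Z ω ≤ A ω (min t T)}) S) ω
          else Y S ω)
      =ᵐ[P] fun ω => (∫ t in Set.Ioc 0 S, Y t ω ∂(F ω).measure) + Y S ω * (1 - F ω S) :=
  statement7_general P Z hZmeas hZpos FZ hFZ 𝒢 h𝒢 hindep T S hS A hAmono hAcont hA0 hAmeas Y hYmeas
    hYcont C hYbdd F hF
end

section
/- Let ξ be a standard normal random variable and define X_t = t·ξ for t ∈ [0,1]. Then the optimal stopping value sup_{τ ∈ S} E[X_{τ∧1}] over stopping times of the filtration generated by X equals 1/√(2π). Moreover, the stopping times τₙ := 1 if X_{1/n} > 0 and τₙ := 1/n if X_{1/n} ≤ 0 satisfy E[X_{τₙ}] → 1/√(2π). -/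
/-!
Since `0 ≤ min τ 1 ≤ 1`, the payoff `min τ 1 * ξ` is bounded pointwise by `ξ⁺`, so no stopping time
beats `E[ξ⁺] = 1/√(2π)`. Conversely, the filtration already contains `σ(ξ)` at every positive time,
so `τₙ` may stop at `1` when `ξ > 0` and at `1/n` otherwise; it collects `ξ⁺ - ξ⁻/n`, whose mean
is `(1 - 1/n)/√(2π)`.
-/

open MeasureTheory Filter ProbabilityTheory Set Real

lemma integral_Ioi_mul_exp_neg_sq_div_two :
    ∫ x in Ioi (0 : ℝ), x * exp (-x ^ 2 / 2) = 1 := by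
  have h := integral_mul_cexp_neg_mul_sq (b := 1 / 2) (by norm_num)
  have hofReal : (fun x : ℝ => ((x * exp (-x ^ 2 / 2) : ℝ) : ℂ))
      = fun x : ℝ => (x : ℂ) * Complex.exp (-(1 / 2) * (x : ℂ) ^ 2) := by
    ext x
    push_cast
    ring_nf
  rw [← Complex.ofReal_inj, ← integral_complex_ofReal, hofReal, h]
  norm_num

lemma integral_max_zero_gaussianReal :
    ∫ x, max x 0 ∂gaussianReal 0 1 = (√(2 * π))⁻¹ := by
  have hpdf : ∀ x, gaussianPDFReal 0 1 x • max x 0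
      = (Ioi 0).indicator (fun x => (√(2 * π))⁻¹ * (x * exp (-x ^ 2 / 2))) x := by
    intro x
    rcases le_or_gt x 0 with hx | hx
    · simp [hx, not_lt.2 hx]
    · rw [indicator_of_mem (mem_Ioi.2 hx), max_eq_left hx.le, smul_eq_mul, gaussianPDFReal]
      simp only [NNReal.coe_one, mul_one, sub_zero]
      ring
  simp_rw [integral_gaussianReal_eq_integral_smul one_ne_zero, hpdf,
    integral_indicator measurableSet_Ioi, integral_const_mul, integral_Ioi_mul_exp_neg_sq_div_two,
    mul_one]

lemma integrable_max_zero_gaussianReal : Integrable (fun x => max x 0) (gaussianReal 0 1) :=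
  ((memLp_id_gaussianReal 1).integrable le_rfl).pos_part

lemma integral_ite_mul_gaussianReal {ε : ℝ} (hε : 0 < ε) :
    ∫ x, (if 0 < ε * x then 1 else ε) * x ∂gaussianReal 0 1 = (1 - ε) * (√(2 * π))⁻¹ := by
  have hsplit : ∀ x : ℝ, (if 0 < ε * x then 1 else ε) * x = ε * x + (1 - ε) * max x 0 := by
    intro x
    rcases le_or_gt x 0 with hx | hx
    · simp [mul_nonpos_of_nonneg_of_nonpos hε.le hx, hx]
    · rw [if_pos (mul_pos hε hx), max_eq_left hx.le]
      ring
  have hid : Integrable (fun x : ℝ => x) (gaussianReal 0 1) :=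
    (memLp_id_gaussianReal 1).integrable le_rfl
  simp_rw [hsplit]
  rw [integral_add (hid.const_mul ε) (integrable_max_zero_gaussianReal.const_mul _),
    integral_const_mul, integral_const_mul, integral_id_gaussianReal,
    integral_max_zero_gaussianReal]
  ring

lemma integral_mul_le_integral_max_zero {Ω : Type*} {m0 : MeasurableSpace Ω} {P : Measure Ω}
    {a ξ : Ω → ℝ} (ha₀ : ∀ ω, 0 ≤ a ω) (ha₁ : ∀ ω, a ω ≤ 1)
    (hξ : Integrable (fun ω => max (ξ ω) 0) P) :
    ∫ ω, a ω * ξ ω ∂P ≤ ∫ ω, max (ξ ω) 0 ∂P := by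
  have hle : ∀ ω, a ω * ξ ω ≤ max (ξ ω) 0 := fun ω => by
    rcases le_or_gt (ξ ω) 0 with h | h
    · exact (mul_nonpos_of_nonneg_of_nonpos (ha₀ ω) h).trans (le_max_right _ _)
    · exact (mul_le_of_le_one_left h.le (ha₁ ω)).trans (le_max_left _ _)
  by_cases hint : Integrable (fun ω => a ω * ξ ω) P
  · exact integral_mono hint hξ hle
  · rw [integral_undef hint]
    exact integral_nonneg fun ω => le_max_right _ _

section LinearProcess

variable {Ω : Type*} {m0 : MeasurableSpace Ω} {P : Measure Ω} {ξ : Ω → ℝ} {ℱ : Filtration ℝ m0}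

lemma measurable_mul_of_eq_iSup_comap
    (hℱ : ∀ t, ℱ t = ⨆ s ∈ Icc (0 : ℝ) t, MeasurableSpace.comap (fun ω => s * ξ ω) inferInstance)
    {t : ℝ} (ht : 0 ≤ t) : Measurable[ℱ t] fun ω => t * ξ ω := by
  rw [measurable_iff_comap_le, hℱ t]
  exact le_biSup (fun s => MeasurableSpace.comap (fun ω => s * ξ ω) inferInstance) ⟨ht, le_rfl⟩

lemma isStoppingTime_ite_of_eq_iSup_comap
    (hℱ : ∀ t, ℱ t = ⨆ s ∈ Icc (0 : ℝ) t, MeasurableSpace.comap (fun ω => s * ξ ω) inferInstance)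
    {ε : ℝ} (hε₀ : 0 ≤ ε) (hε₁ : ε ≤ 1) :
    IsStoppingTime ℱ fun ω => ((if 0 < ε * ξ ω then 1 else ε : ℝ) : WithTop ℝ) := by
  have hs : MeasurableSet[ℱ ε] {ω | ε * ξ ω ≤ 0} :=
    measurableSet_le (measurable_mul_of_eq_iSup_comap hℱ hε₀) measurable_const
  convert isStoppingTime_piecewise_const hε₁ hs using 1
  ext ω
  by_cases h : ε * ξ ω ≤ 0 <;> simp [Set.piecewise, h]

lemma integral_min_mul_le_of_hasLaw_gaussianReal (hξ : HasLaw ξ (gaussianReal 0 1) P)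
    {τ : Ω → ℝ} (hτ : ∀ ω, 0 ≤ τ ω) : ∫ ω, min (τ ω) 1 * ξ ω ∂P ≤ (√(2 * π))⁻¹ := by
  have hpos : Integrable (fun ω => max (ξ ω) 0) P :=
    (hξ.map_eq.symm ▸ integrable_max_zero_gaussianReal :
      Integrable (fun x => max x 0) (P.map ξ)).comp_aemeasurable hξ.aemeasurable
  calc ∫ ω, min (τ ω) 1 * ξ ω ∂P ≤ ∫ ω, max (ξ ω) 0 ∂P :=
        integral_mul_le_integral_max_zero (fun ω => le_min (hτ ω) zero_le_one)
          (fun ω => min_le_right _ _) hpos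
    _ = (√(2 * π))⁻¹ :=
        (hξ.integral_comp integrable_max_zero_gaussianReal.1).trans integral_max_zero_gaussianReal

lemma integral_ite_mul_of_hasLaw_gaussianReal (hξ : HasLaw ξ (gaussianReal 0 1) P)
    {ε : ℝ} (hε : 0 < ε) :
    ∫ ω, (if 0 < ε * ξ ω then 1 else ε) * ξ ω ∂P = (1 - ε) * (√(2 * π))⁻¹ := by
  have hmeas : Measurable fun x : ℝ => (if 0 < ε * x then 1 else ε) * x :=
    (Measurable.ite (measurableSet_lt measurable_const (by fun_prop)) measurable_const
      measurable_const).mul measurable_id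
  exact (hξ.integral_comp hmeas.aestronglyMeasurable).trans (integral_ite_mul_gaussianReal hε)

end LinearProcess

/-- for `X_t = t·ξ` with `ξ` standard normal (the `H = 1` fractional Brownian
motion), the optimal stopping value over `[0,1]` equals `1/√(2π)`, and the stopping times
`τₙ = 1` if `X_{1/n} > 0`, `τₙ = 1/n` otherwise, satisfy `E[X_{τₙ}] → 1/√(2π)`. -/
theorem statement9 {Ω : Type*} {m0 : MeasurableSpace Ω} (P : Measure Ω)
    [IsProbabilityMeasure P]
    (ξ : Ω → ℝ) (hξ : Measurable ξ)
    (hgauss : P.map ξ = ProbabilityTheory.gaussianReal 0 1)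
    (ℱ : Filtration ℝ m0)
    (hℱ : ∀ t, ℱ t =
      ⨆ s ∈ Set.Icc (0:ℝ) t, MeasurableSpace.comap (fun ω => s * ξ ω) inferInstance) :
    (⨆ τ : {τ : Ω → ℝ // IsStoppingTime ℱ (fun ω => (τ ω : WithTop ℝ)) ∧ ∀ ω, 0 ≤ τ ω},
        ∫ ω, min (τ.1 ω) 1 * ξ ω ∂P) = 1 / Real.sqrt (2 * Real.pi) ∧
    Tendsto (fun n : ℕ =>
        ∫ ω, (if 0 < (1/(n:ℝ)) * ξ ω then (1:ℝ) else 1/(n:ℝ)) * ξ ω ∂P)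
      atTop (nhds (1 / Real.sqrt (2 * Real.pi))) := by
  have hlaw : HasLaw ξ (gaussianReal 0 1) P := ⟨hξ.aemeasurable, hgauss⟩
  have hlim :
      Tendsto (fun n : ℕ => (1 - 1 / (n : ℝ)) * (√(2 * π))⁻¹) atTop (nhds (√(2 * π))⁻¹) := by
    simpa using (tendsto_one_div_atTop_nhds_zero_nat.const_sub 1).mul_const (√(2 * π))⁻¹
  have hupper (τ : {τ : Ω → ℝ // IsStoppingTime ℱ (fun ω => (τ ω : WithTop ℝ)) ∧ ∀ ω, 0 ≤ τ ω}) :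
      ∫ ω, min (τ.1 ω) 1 * ξ ω ∂P ≤ (√(2 * π))⁻¹ :=
    integral_min_mul_le_of_hasLaw_gaussianReal hlaw τ.2.2
  have hlower (n : ℕ) (hn : 1 ≤ n) : (1 - 1 / (n : ℝ)) * (√(2 * π))⁻¹ ≤
      ⨆ τ : {τ : Ω → ℝ // IsStoppingTime ℱ (fun ω => (τ ω : WithTop ℝ)) ∧ ∀ ω, 0 ≤ τ ω},
        ∫ ω, min (τ.1 ω) 1 * ξ ω ∂P := by
    have hn₀ : (0 : ℝ) < 1 / n := by positivity
    have hn₁ : 1 / (n : ℝ) ≤ 1 := div_le_one_of_le₀ (by exact_mod_cast hn) n.cast_nonneg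
    have hτ₁ (ω : Ω) : (if 0 < 1 / (n : ℝ) * ξ ω then 1 else 1 / (n : ℝ)) ≤ 1 := by
      split <;> linarith
    refine le_ciSup_of_le ⟨(√(2 * π))⁻¹, forall_mem_range.2 hupper⟩
      ⟨fun ω => if 0 < 1 / (n : ℝ) * ξ ω then 1 else 1 / (n : ℝ),
        isStoppingTime_ite_of_eq_iSup_comap hℱ hn₀.le hn₁,
        fun ω => by dsimp only; split <;> positivity⟩ ?_
    simp only [min_eq_left (hτ₁ _), integral_ite_mul_of_hasLaw_gaussianReal hlaw hn₀, le_rfl]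
  have : Nonempty {τ : Ω → ℝ // IsStoppingTime ℱ (fun ω => (τ ω : WithTop ℝ)) ∧ ∀ ω, 0 ≤ τ ω} :=
    ⟨⟨fun _ => 0, isStoppingTime_const ℱ 0, fun _ => le_rfl⟩⟩
  rw [one_div]
  exact ⟨le_antisymm (ciSup_le hupper) (le_of_tendsto hlim (eventually_atTop.2 ⟨1, hlower⟩)),
    hlim.congr' (eventually_atTop.2 ⟨1, fun n hn =>
      (integral_ite_mul_of_hasLaw_gaussianReal hlaw (by positivity)).symm⟩)⟩
end

section
/- With μ_j defined by μ_J = 0 and μ_j = √(j/(j+1))·γ(μ_{j+1}√((j+1)/j)) where γ(x) = φ(x) + xΦ(x), one has μ_j ≥ γ(2μ_{j+1})/2 for all 1 ≤ j ≤ J−1, hence μ₁ ≥ f^{∘(J−1)}(0) with f(x) := γ(2x)/2; since f is continuous with f(x) > x for all x ≥ 0, it follows that μ₁ → ∞ as J → ∞. -/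
/-!
Put `c = √((j+1)/j) ∈ (1, 2]`; the recursion reads `μ_j = γ(c μ_{j+1}) / c`. The map
`c ↦ γ(c m) / c` is decreasing on `(0, ∞)`, its derivative being `-φ(c m) / c²`, so
`μ_j ≥ γ(2 μ_{j+1}) / 2 = f(μ_{j+1})`. Since `f` is monotone, running this from `μ_J = 0` gives
`μ₁ ≥ f^[J-1] 0`. Finally `γ(x) - x = E[(Z - x)⁺] > 0`, so `f(x) > x`: the orbit of `0` increases,
and a finite limit would be a fixed point of the continuous map `f`.
-/

noncomputable section

/-- The standard normal density `φ`. -/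
def npdf (x : ℝ) : ℝ := Real.exp (-x ^ 2 / 2) / Real.sqrt (2 * Real.pi)

/-- The standard normal cumulative distribution function `Φ`. -/
def ncdf (x : ℝ) : ℝ := ∫ u in Set.Iic x, npdf u

/-- `γ(x) = φ(x) + x Φ(x)`. -/
def gammaFn (x : ℝ) : ℝ := npdf x + x * ncdf x

open Real MeasureTheory ProbabilityTheory Set Filter Topology

lemma npdf_eq_gaussianPDFReal : npdf = gaussianPDFReal 0 1 := by
  ext x
  simp [npdf, gaussianPDFReal, div_eq_inv_mul]

lemma npdf_pos (x : ℝ) : 0 < npdf x := by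
  rw [npdf_eq_gaussianPDFReal]
  exact gaussianPDFReal_pos _ _ _ one_ne_zero

lemma continuous_npdf : Continuous npdf := by
  unfold npdf; fun_prop

lemma integrable_npdf : Integrable npdf := by
  rw [npdf_eq_gaussianPDFReal]
  exact integrable_gaussianPDFReal _ _

lemma integral_npdf : ∫ x, npdf x = 1 := by
  rw [npdf_eq_gaussianPDFReal]
  exact integral_gaussianPDFReal_eq_one _ one_ne_zero

lemma integrable_mul_npdf : Integrable fun x => x * npdf x := by
  refine ((integrable_mul_exp_neg_mul_sq (b := 1 / 2) (by norm_num)).div_const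
    √(2 * π)).congr (Eventually.of_forall fun x => ?_)
  simp only [npdf]
  ring_nf

lemma hasDerivAt_npdf (x : ℝ) : HasDerivAt npdf (-x * npdf x) x := by
  have h : HasDerivAt (fun y : ℝ => -y ^ 2 / 2) (-x) x :=
    ((hasDerivAt_pow 2 x).neg.div_const 2).congr_deriv (by norm_num; ring)
  exact (h.exp.div_const √(2 * π)).congr_deriv (by rw [npdf]; ring)

lemma tendsto_npdf_atTop : Tendsto npdf atTop (𝓝 0) := by
  have h : Tendsto (fun x : ℝ => -x ^ 2 / 2) atTop atBot :=
    (tendsto_neg_atTop_atBot.comp (tendsto_pow_atTop two_ne_zero)).atBot_div_const two_pos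
  have := (tendsto_exp_atBot.comp h).div_const √(2 * π)
  rwa [zero_div] at this

lemma ncdf_nonneg (x : ℝ) : 0 ≤ ncdf x :=
  setIntegral_nonneg measurableSet_Iic fun u _ => (npdf_pos u).le

lemma hasDerivAt_ncdf (x : ℝ) : HasDerivAt ncdf (npdf x) x := by
  have h : ∀ y, ncdf 0 + ∫ u in (0 : ℝ)..y, npdf u = ncdf y := fun y => by
    rw [← intervalIntegral.integral_Iic_sub_Iic integrable_npdf.integrableOn
      integrable_npdf.integrableOn]
    unfold ncdf; ring
  refine HasDerivAt.congr_of_eventuallyEq ?_ (Eventually.of_forall fun y => (h y).symm)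
  exact (intervalIntegral.integral_hasDerivAt_right integrable_npdf.intervalIntegrable
    (continuous_npdf.stronglyMeasurableAtFilter _ _) continuous_npdf.continuousAt).const_add _

lemma integral_Ioi_npdf (x : ℝ) : ∫ u in Ioi x, npdf u = 1 - ncdf x := by
  rw [← integral_npdf, ← integral_add_compl (measurableSet_Iic (a := x)) integrable_npdf,
    compl_Iic, ncdf]
  ring

lemma integral_Ioi_mul_npdf (x : ℝ) : ∫ u in Ioi x, u * npdf u = npdf x := by
  have hderiv : ∀ u ∈ Ici x, HasDerivAt (fun y => -npdf y) (u * npdf u) u := fun u _ =>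
    (hasDerivAt_npdf u).neg.congr_deriv (by ring)
  rw [integral_Ioi_of_hasDerivAt_of_tendsto' hderiv integrable_mul_npdf.integrableOn
    tendsto_npdf_atTop.neg]
  simp

lemma hasDerivAt_gammaFn (x : ℝ) : HasDerivAt gammaFn (ncdf x) x :=
  ((hasDerivAt_npdf x).add ((hasDerivAt_id x).mul (hasDerivAt_ncdf x))).congr_deriv
    (by simp only [id]; ring)

@[fun_prop]
lemma continuous_gammaFn : Continuous gammaFn :=
  continuous_iff_continuousAt.2 fun x => (hasDerivAt_gammaFn x).continuousAt

lemma monotone_gammaFn : Monotone gammaFn :=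
  monotone_of_deriv_nonneg (fun x => (hasDerivAt_gammaFn x).differentiableAt)
    fun x => (hasDerivAt_gammaFn x).deriv ▸ ncdf_nonneg x

lemma gammaFn_sub_self (x : ℝ) : gammaFn x - x = ∫ u in Ioi x, (u - x) * npdf u := by
  simp_rw [sub_mul]
  rw [integral_sub integrable_mul_npdf.integrableOn
    (integrable_npdf.integrableOn.const_mul x), integral_const_mul,
    integral_Ioi_mul_npdf, integral_Ioi_npdf, gammaFn]
  ring

lemma lt_gammaFn (x : ℝ) : x < gammaFn x := by
  have hint : IntegrableOn (fun u => (u - x) * npdf u) (Ioi x) := by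
    simp_rw [sub_mul]
    exact integrable_mul_npdf.integrableOn.sub (integrable_npdf.integrableOn.const_mul x)
  have hpos : ∀ u ∈ Ioi x, 0 < (u - x) * npdf u := fun u hu =>
    mul_pos (sub_pos.2 hu) (npdf_pos u)
  have : 0 < ∫ u in Ioi x, (u - x) * npdf u := by
    rw [setIntegral_pos_iff_support_of_nonneg_ae
      ((ae_restrict_mem measurableSet_Ioi).mono fun u hu => (hpos u hu).le) hint]
    refine lt_of_lt_of_le ?_ (measure_mono fun u hu => ⟨(hpos u hu).ne', hu⟩)
    simp
  linarith [gammaFn_sub_self x]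

lemma antitoneOn_gammaFn_mul_div (m : ℝ) : AntitoneOn (fun c => gammaFn (m * c) / c) (Ioi 0) := by
  have hderiv : ∀ c ∈ Ioi (0 : ℝ),
      HasDerivAt (fun c => gammaFn (m * c) / c) (-npdf (m * c) / c ^ 2) c := fun c hc => by
    refine (((hasDerivAt_gammaFn (m * c)).comp c ((hasDerivAt_id c).const_mul m)).div
      (hasDerivAt_id c) (ne_of_gt hc)).congr_deriv ?_
    simp only [id, Function.comp_apply, gammaFn]
    field_simp
    ring
  refine antitoneOn_of_hasDerivWithinAt_nonpos (convex_Ioi 0)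
    (fun c hc => (hderiv c hc).continuousAt.continuousWithinAt)
    (fun c hc => (hderiv c (interior_subset hc)).hasDerivWithinAt) fun c _ => ?_
  exact div_nonpos_of_nonpos_of_nonneg (neg_nonpos.2 (npdf_pos _).le) (sq_nonneg c)

lemma gammaFn_two_mul_div_two_le {j : ℝ} (hj : 1 / 3 ≤ j) (m : ℝ) :
    gammaFn (2 * m) / 2 ≤ √(j / (j + 1)) * gammaFn (m * √((j + 1) / j)) := by
  have hc0 : 0 < √((j + 1) / j) := Real.sqrt_pos.2 (div_pos (by linarith) (by linarith))
  have hc2 : √((j + 1) / j) ≤ 2 :=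
    Real.sqrt_le_iff.2 ⟨zero_le_two, by rw [div_le_iff₀ (by linarith)]; linarith⟩
  rw [← inv_div (j + 1) j, Real.sqrt_inv, inv_mul_eq_div, mul_comm 2 m]
  exact antitoneOn_gammaFn_mul_div m hc0 (mem_Ioi.2 two_pos) hc2

theorem tendsto_iterate_atTop_of_lt {α : Type*} [ConditionallyCompleteLinearOrder α]
    [TopologicalSpace α] [OrderTopology α] {f : α → α} (hf : Continuous f)
    (hlt : ∀ x, x < f x) (x : α) : Tendsto (fun n => f^[n] x) atTop atTop := by
  have hmono : Monotone fun n => f^[n] x :=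
    monotone_nat_of_le_succ fun n => (Function.iterate_succ_apply' f n x).symm ▸ (hlt _).le
  refine (tendsto_atTop_of_monotone hmono).resolve_right ?_
  rintro ⟨l, hl⟩
  exact (hlt l).ne (isFixedPt_of_tendsto_iterate hl hf.continuousAt).symm

/-- with `μ_J^{(J)} = 0` and
`μ_j^{(J)} = √(j/(j+1)) γ(μ_{j+1}^{(J)} √((j+1)/j))`, one has
`μ_j ≥ γ(2μ_{j+1})/2`, hence `μ₁ ≥ f^{∘(J−1)}(0)` for `f(x) = γ(2x)/2`, and `μ₁ → ∞` as
`J → ∞`. -/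
theorem statement13 (μ : ℕ → ℕ → ℝ)
    (hμJ : ∀ J, μ J J = 0)
    (hμrec : ∀ J j, 1 ≤ j → j < J →
      μ J j = Real.sqrt ((j : ℝ) / ((j : ℝ) + 1)) *
        gammaFn (μ J (j + 1) * Real.sqrt (((j : ℝ) + 1) / (j : ℝ)))) :
    (∀ J j, 1 ≤ j → j < J → gammaFn (2 * μ J (j + 1)) / 2 ≤ μ J j) ∧
    (∀ J, 1 ≤ J → (fun x => gammaFn (2 * x) / 2)^[J - 1] 0 ≤ μ J 1) ∧
    Filter.Tendsto (fun J => μ J 1) Filter.atTop Filter.atTop := by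
  set f : ℝ → ℝ := fun x => gammaFn (2 * x) / 2
  have hf_mono : Monotone f := fun x y hxy =>
    div_le_div_of_nonneg_right (monotone_gammaFn (by linarith)) zero_le_two
  have hf_lt (x : ℝ) : x < f x := show x < gammaFn (2 * x) / 2 by linarith [lt_gammaFn (2 * x)]
  have hf_cont : Continuous f := by unfold f; fun_prop
  have step (J j : ℕ) (hj : 1 ≤ j) (hjJ : j < J) : f (μ J (j + 1)) ≤ μ J j := by
    rw [hμrec J j hj hjJ]
    exact gammaFn_two_mul_div_two_le (by linarith [(Nat.one_le_cast.2 hj : (1 : ℝ) ≤ j)]) _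
  have iterate_le (J : ℕ) (hJ : 1 ≤ J) : f^[J - 1] 0 ≤ μ J 1 := by
    -- compare the orbit of `0` under `f` with `μ J` read backwards from `μ J J = 0`
    have h := hf_mono.seq_le_seq (x := fun n => f^[n] 0) (y := fun k => μ J (J - k)) (J - 1)
      (by simp [hμJ]) (fun k _ => (Function.iterate_succ_apply' f k 0).le) fun k hk => by
        simpa [show J - k = J - (k + 1) + 1 by omega] using
          step J (J - (k + 1)) (by omega) (by omega)
    simpa [show J - (J - 1) = 1 by omega] using h
  refine ⟨step, iterate_le, ?_⟩
  exact tendsto_atTop_mono' atTop ((eventually_ge_atTop 1).mono iterate_le)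
    ((tendsto_iterate_atTop_of_lt hf_cont hf_lt 0).comp (tendsto_sub_atTop_nat 1))

end
end
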